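/- arXiv:1905.05545 — 6 statements merged into one kernel-verified Lean document; each statement's English description precedes it below -/
import Mathlib

section
/- Let F be a field, let S = F[x_1, …, x_g] be a polynomial ring with its standard grading, and let ≺ be a monomial order on S. Let I be a homogeneous ideal of S which is generated by its homogeneous elements of degree 2, and let G be a set of homogeneous degree-2 elements of I. If dim_F (S/⟨in_≺(f) : f ∈ G⟩)_2 ≤ dim_F (S/I)_2, then I = ⟨G⟩. -/
/-!
Let `V` be the `F`-span of `G` and `I₂` the degree-2 part of `I`, so `V ≤ I₂`. The leading terms
of `G` are forms of degree 2, so the degree-2 part of `⟨in_≺(G)⟩` is their span; it is spanned by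
one monomial per leading exponent, and choosing one element of `G` for each such exponent gives a
linearly independent family in `V`, so `dim span in_≺(G) ≤ dim V`. By rank–nullity the hypothesis
reads `dim I₂ ≤ dim span in_≺(G)`, hence `V = I₂`, and `I`, being generated by `I₂`, is generated
by `G`.
-/

open MvPolynomial

/-- The leading exponent of a multivariate polynomial with respect to a monomial order:
the `≺`-largest exponent appearing in the support (and `0` for the zero polynomial). -/
noncomputable def leadExp {σ F : Type*} [CommSemiring F] (m : MonomialOrder σ)
    (f : MvPolynomial σ F) : σ →₀ ℕ :=
  m.toSyn.symm (f.support.sup fun d => m.toSyn d)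

/-- The leading term `in_≺(f)` of a multivariate polynomial with respect to a monomial order. -/
noncomputable def leadTerm {σ F : Type*} [CommSemiring F] (m : MonomialOrder σ)
    (f : MvPolynomial σ F) : MvPolynomial σ F :=
  monomial (leadExp m f) (f.coeff (leadExp m f))

/-- The dimension of the degree-2 graded piece of `S/J`, realized as the image of the
space of homogeneous degree-2 polynomials in the quotient. -/
noncomputable def dimDegTwoPiece (F : Type*) [Field F] {σ : Type*}
    (J : Ideal (MvPolynomial σ F)) : ℕ :=
  Module.finrank F
    ((homogeneousSubmodule σ F 2).map (Ideal.Quotient.mkₐ F J).toLinearMap)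

theorem leadTerm_eq_leadingTerm {σ F : Type*} [CommSemiring F] (m : MonomialOrder σ) :
    leadTerm (F := F) m = m.leadingTerm :=
  rfl

namespace MonomialOrder

variable {σ : Type*} (m : MonomialOrder σ)

theorem isHomogeneous_leadingTerm {R : Type*} [CommSemiring R] {f : MvPolynomial σ R} {n : ℕ}
    (hf : f.IsHomogeneous n) : (m.leadingTerm f).IsHomogeneous n := by
  by_cases hc : m.leadingCoeff f = 0
  · simp [leadingTerm, hc, isHomogeneous_zero]
  · exact isHomogeneous_monomial _ (by rw [Finsupp.degree_eq_weight_one]; exact hf hc)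

theorem linearIndependent_of_injective_degree {R ι : Type*} [CommRing R] [NoZeroDivisors R]
    {v : ι → MvPolynomial σ R} (hv : ∀ i, v i ≠ 0)
    (hdeg : Function.Injective fun i => m.degree (v i)) : LinearIndependent R v := by
  classical
  rw [linearIndependent_iff']
  intro s c hsum i hi
  by_contra hci
  obtain ⟨i₀, hi₀, hmax⟩ := (s.filter fun j => c j ≠ 0).exists_max_image
    (fun j => m.toSyn (m.degree (v j))) ⟨i, Finset.mem_filter.mpr ⟨hi, hci⟩⟩
  obtain ⟨hi₀s, hci₀⟩ := Finset.mem_filter.mp hi₀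
  -- every other summand has strictly smaller degree, so only `i₀` contributes to this coefficient
  have hcoeff : (∑ j ∈ s, c j • v j).coeff (m.degree (v i₀)) = c i₀ * m.leadingCoeff (v i₀) := by
    rw [coeff_sum, Finset.sum_eq_single_of_mem i₀ hi₀s, coeff_smul, smul_eq_mul, leadingCoeff]
    intro j hjs hj
    by_cases hcj : c j = 0
    · simp [hcj]
    have hlt : m.degree (v j) ≺[m] m.degree (v i₀) :=
      lt_of_le_of_ne (hmax j (Finset.mem_filter.mpr ⟨hjs, hcj⟩))
        fun h => hj (hdeg (m.toSyn.injective h))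
    rw [coeff_smul, m.coeff_eq_zero_of_lt hlt, smul_zero]
  rw [hsum, coeff_zero, eq_comm] at hcoeff
  exact mul_ne_zero hci₀ (m.leadingCoeff_ne_zero_iff.mpr (hv i₀)) hcoeff

theorem finrank_span_leadingTerm_le {F : Type*} [Field F] (G : Set (MvPolynomial σ F))
    [FiniteDimensional F (Submodule.span F G)] :
    Module.finrank F (Submodule.span F (m.leadingTerm '' G))
      ≤ Module.finrank F (Submodule.span F G) := by
  classical
  set D := m.degree '' (G \ {0})
  obtain ⟨w, hwG, hwdeg⟩ : ∃ w : D → MvPolynomial σ F,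
      (∀ e, w e ∈ G \ {0}) ∧ ∀ e, m.degree (w e) = e :=
    ⟨fun e => e.2.choose, fun e => e.2.choose_spec.1, fun e => e.2.choose_spec.2⟩
  have hw : LinearIndependent F fun e => (⟨w e, Submodule.subset_span (hwG e).1⟩ :
      Submodule.span F G) :=
    .of_comp (Submodule.span F G).subtype <|
      m.linearIndependent_of_injective_degree (fun e => (hwG e).2)
        fun a b h => Subtype.ext ((hwdeg a).symm.trans (h.trans (hwdeg b)))
  have : Finite D := hw.finite
  have := Fintype.ofFinite D
  set x : D → MvPolynomial σ F := fun e => monomial e 1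
  have := Module.Finite.span_of_finite F (Set.finite_range x)
  have hle : Submodule.span F (m.leadingTerm '' G) ≤ Submodule.span F (Set.range x) := by
    rw [Submodule.span_le]
    rintro _ ⟨f, hf, rfl⟩
    by_cases hf0 : f = 0
    · simp [hf0]
    rw [← C_mul_leadingCoeff_monomial_degree, ← smul_eq_C_mul]
    exact Submodule.smul_mem _ _ (Submodule.subset_span ⟨⟨_, f, ⟨hf, hf0⟩, rfl⟩, rfl⟩)
  calc Module.finrank F (Submodule.span F (m.leadingTerm '' G))
      ≤ (Set.range x).finrank F := Submodule.finrank_mono hle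
    _ ≤ Fintype.card D := finrank_range_le_card _
    _ ≤ Module.finrank F (Submodule.span F G) := hw.fintype_card_le_finrank

end MonomialOrder

theorem Submodule.finrank_map_add_finrank_ker_inf {K V W : Type*} [DivisionRing K]
    [AddCommGroup V] [Module K V] [AddCommGroup W] [Module K W] (f : V →ₗ[K] W)
    (p : Submodule K V) [FiniteDimensional K p] :
    Module.finrank K (p.map f) + Module.finrank K (LinearMap.ker f ⊓ p : Submodule K V)
      = Module.finrank K p := by
  rw [← (f.domRestrict p).finrank_range_add_finrank_ker, LinearMap.range_domRestrict,
    LinearMap.ker_domRestrict, ← Submodule.finrank_map_subtype_eq, Submodule.map_comap_subtype,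
    inf_comm]

namespace MvPolynomial

variable {σ R : Type*} [CommSemiring R]

theorem homogeneousComponent_mul_of_isHomogeneous (a : MvPolynomial σ R)
    {g : MvPolynomial σ R} {n : ℕ} (hg : g.IsHomogeneous n) :
    homogeneousComponent n (a * g) = C (a.coeff 0) * g := by
  classical
  induction a using MvPolynomial.induction_on' with
  | monomial d c =>
    rw [homogeneousComponent_of_mem
      ((mem_homogeneousSubmodule _ _).mpr ((isHomogeneous_monomial c rfl).mul hg))]
    by_cases hd : d = 0
    · simp [hd]
    · rw [coeff_monomial, if_neg hd, if_neg (by simpa [Finsupp.degree_eq_zero_iff] using hd)]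
      simp
  | add a b ha hb => simp [add_mul, ha, hb]

theorem restrictScalars_span_inf_homogeneousSubmodule {G : Set (MvPolynomial σ R)} {n : ℕ}
    (hG : ∀ f ∈ G, f.IsHomogeneous n) :
    (Ideal.span G).restrictScalars R ⊓ homogeneousSubmodule σ R n = Submodule.span R G := by
  refine le_antisymm ?_ (Submodule.span_le.mpr fun f hf =>
    ⟨Ideal.subset_span hf, (mem_homogeneousSubmodule n f).mpr (hG f hf)⟩)
  rintro p ⟨hpG, hpn⟩
  have key : ∀ a, homogeneousComponent n (a * p) ∈ Submodule.span R G := by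
    refine Submodule.span_induction ?_ ?_ ?_ ?_ hpG
    · intro f hf a
      rw [homogeneousComponent_mul_of_isHomogeneous a (hG f hf), ← smul_eq_C_mul]
      exact Submodule.smul_mem _ _ (Submodule.subset_span hf)
    · simp
    · intro x y _ _ hx hy a
      rw [mul_add, map_add]
      exact add_mem (hx a) (hy a)
    · intro b x _ hx a
      rw [smul_eq_mul, ← mul_assoc]
      exact hx (a * b)
  simpa [homogeneousComponent_of_mem hpn] using key 1

end MvPolynomial

instance MvPolynomial.finite_homogeneousSubmodule {σ R : Type*} [CommSemiring R] [Finite σ]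
    (n : ℕ) : Module.Finite R (homogeneousSubmodule σ R n) :=
  Module.Finite.iff_fg.mpr (homogeneousSubmodule_fg σ R n)

theorem dimDegTwoPiece_add_finrank {F σ : Type*} [Field F] [Finite σ]
    (J : Ideal (MvPolynomial σ F)) :
    dimDegTwoPiece F J + Module.finrank F (J.restrictScalars F ⊓ homogeneousSubmodule σ F 2 :
        Submodule F (MvPolynomial σ F))
      = Module.finrank F (homogeneousSubmodule σ F 2) := by
  have hker : LinearMap.ker (Ideal.Quotient.mkₐ F J).toLinearMap = J.restrictScalars F := by
    ext
    simp [Ideal.Quotient.eq_zero_iff_mem]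
  rw [dimDegTwoPiece, ← hker]
  exact Submodule.finrank_map_add_finrank_ker_inf _ _

/-- if `I` is a homogeneous ideal of `S = F[x_1, …, x_g]` generated by its
homogeneous degree-2 elements, `G` is a set of homogeneous degree-2 elements of `I`, and
`dim_F (S/⟨in_≺(G)⟩)_2 ≤ dim_F (S/I)_2`, then `I = ⟨G⟩`. -/
theorem generation_criterion_degree_two {F : Type*} [Field F] {g : ℕ}
    (m : MonomialOrder (Fin g)) (I : Ideal (MvPolynomial (Fin g) F))
    (hI : I = Ideal.span {f : MvPolynomial (Fin g) F | f ∈ I ∧ f.IsHomogeneous 2})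
    (G : Set (MvPolynomial (Fin g) F)) (hGI : G ⊆ (I : Set (MvPolynomial (Fin g) F)))
    (hGhom : ∀ f ∈ G, f.IsHomogeneous 2)
    (hdim : dimDegTwoPiece F (Ideal.span (leadTerm m '' G)) ≤ dimDegTwoPiece F I) :
    I = Ideal.span G := by
  set I₂ : Submodule F (MvPolynomial (Fin g) F) :=
    I.restrictScalars F ⊓ homogeneousSubmodule (Fin g) F 2
  have hGI₂ : Submodule.span F G ≤ I₂ :=
    Submodule.span_le.mpr fun f hf => ⟨hGI hf, hGhom f hf⟩
  have : FiniteDimensional F (Submodule.span F G) :=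
    Submodule.finiteDimensional_of_le (hGI₂.trans inf_le_right)
  have hLT : (Ideal.span (m.leadingTerm '' G)).restrictScalars F
      ⊓ homogeneousSubmodule (Fin g) F 2 = Submodule.span F (m.leadingTerm '' G) :=
    restrictScalars_span_inf_homogeneousSubmodule <| by
      rintro _ ⟨f, hf, rfl⟩
      exact m.isHomogeneous_leadingTerm (hGhom f hf)
  have hLTdim := dimDegTwoPiece_add_finrank (Ideal.span (m.leadingTerm '' G))
  have hIdim : dimDegTwoPiece F I + Module.finrank F I₂ = _ := dimDegTwoPiece_add_finrank I
  rw [hLT] at hLTdim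
  rw [leadTerm_eq_leadingTerm] at hdim
  have hspan : Submodule.span F G = I₂ :=
    Submodule.eq_of_le_of_finrank_le hGI₂ <| by
      have := m.finrank_span_leadingTerm_le G
      omega
  calc I = Ideal.span I₂ := hI
    _ = Ideal.span G := hspan ▸ Submodule.span_span_of_tower F _ G
end

section
/- Let p be a prime and q ≥ 2, 1 ≤ ℓ ≤ p−1 integers. Then C(0) = {(ρ, T) ∈ A + A : 2 ≤ T ≤ p−2 and ρ ≥ b(T+p) − ℓ}. In particular, when ℓ = 1 (so that b(T+p) = 0 for all relevant T), C(0) = {(ρ, T) ∈ A + A : 2 ≤ T ≤ p−2}. -/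
open Pointwise

/-- The index set `A` of the paper. -/
def indexSetA (p q ℓ : ℤ) : Set (ℤ × ℤ) :=
  {x : ℤ × ℤ | 1 ≤ x.2 ∧ x.2 ≤ p - 1 ∧ x.2 * ℓ / p ≤ x.1 ∧ x.1 ≤ x.2 * q - 2}

/-- `b(T) = min { ⌊μℓ/p⌋ + ⌊μ'ℓ/p⌋ : μ + μ' = T, 1 ≤ μ, μ' ≤ p - 1 }`. -/
noncomputable def bLow (p ℓ T : ℤ) : ℤ :=
  sInf {s : ℤ | ∃ μ μ' : ℤ, μ + μ' = T ∧ 1 ≤ μ ∧ μ ≤ p - 1 ∧ 1 ≤ μ' ∧ μ' ≤ p - 1 ∧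
    s = μ * ℓ / p + μ' * ℓ / p}

/-- `j_min(i)`: `0` if `ℓ = 1` and `p - i` otherwise. -/
def jMin (p ℓ i : ℤ) : ℤ := if ℓ = 1 then 0 else p - i

/-- The subset `C(i)` of the Minkowski sum `A + A`. -/
def setC (p q ℓ i : ℤ) : Set (ℤ × ℤ) :=
  {x : ℤ × ℤ | x ∈ indexSetA p q ℓ + indexSetA p q ℓ ∧
    (x.1 + ℓ, x.2 + p) ∈ indexSetA p q ℓ + indexSetA p q ℓ ∧
    ∀ j : ℤ, jMin p ℓ i ≤ j → j ≤ (p - i) * q →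
      (x.1 + j, x.2 + p - i) ∈ indexSetA p q ℓ + indexSetA p q ℓ}

/-! A point `(ρ, T)` lies in `A + A` exactly when `2 ≤ T ≤ 2p - 2` and `b(T) ≤ ρ ≤ Tq - 4`: the
fibres of `A` over `μ` are intervals, and a sum of two integer intervals is an interval. With this
description every condition defining `C(0)` becomes a pair of linear inequalities. The shifted
points `(ρ + j, T + p)` need `T ≤ p - 2` and `b(T + p) ≤ ρ + j`; since `j_min(0) = p > ℓ` for
`ℓ > 1`, the binding constraint is `j = ℓ`, while for `ℓ = 1` all floors vanish and `b ≡ 0`. -/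

-- `bLow p ℓ T` is definitionally `sInf (floorPairSums p ℓ T)`.
def floorPairSums (p ℓ T : ℤ) : Set ℤ :=
  {s : ℤ | ∃ μ μ' : ℤ, μ + μ' = T ∧ 1 ≤ μ ∧ μ ≤ p - 1 ∧ 1 ≤ μ' ∧ μ' ≤ p - 1 ∧
    s = μ * ℓ / p + μ' * ℓ / p}

section FloorSums

variable {p ℓ : ℤ}

theorem mul_ediv_le_sub_one {μ : ℤ} (hℓ : 0 ≤ ℓ) (hℓp : ℓ < p) (hμ : 1 ≤ μ) :
    μ * ℓ / p ≤ μ - 1 := by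
  have : μ * ℓ / p < μ := by
    rw [Int.ediv_lt_iff_lt_mul (by omega)]
    nlinarith
  omega

theorem floorPairSums_nonempty {T : ℤ} (h2T : 2 ≤ T) (hT : T ≤ 2 * p - 2) :
    (floorPairSums p ℓ T).Nonempty :=
  ⟨_, max 1 (T - (p - 1)), T - max 1 (T - (p - 1)), by omega, by omega, by omega, by omega,
    by omega, rfl⟩

theorem floorPairSums_bddBelow (hℓ : 0 ≤ ℓ) (hp : 0 < p) (T : ℤ) :
    BddBelow (floorPairSums p ℓ T) := by
  refine ⟨0, ?_⟩
  rintro s ⟨μ, μ', -, hμ, -, hμ', -, rfl⟩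
  have := Int.ediv_nonneg (by nlinarith : 0 ≤ μ * ℓ) hp.le
  have := Int.ediv_nonneg (by nlinarith : 0 ≤ μ' * ℓ) hp.le
  omega

theorem bLow_le (hℓ : 0 ≤ ℓ) {μ μ' : ℤ} (hμ : 1 ≤ μ) (hμp : μ ≤ p - 1) (hμ' : 1 ≤ μ')
    (hμ'p : μ' ≤ p - 1) : bLow p ℓ (μ + μ') ≤ μ * ℓ / p + μ' * ℓ / p :=
  csInf_le (floorPairSums_bddBelow hℓ (by omega) _) ⟨μ, μ', rfl, hμ, hμp, hμ', hμ'p, rfl⟩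

theorem exists_bLow_eq (hℓ : 0 ≤ ℓ) {T : ℤ} (h2T : 2 ≤ T) (hT : T ≤ 2 * p - 2) :
    ∃ μ μ' : ℤ, μ + μ' = T ∧ 1 ≤ μ ∧ μ ≤ p - 1 ∧ 1 ≤ μ' ∧ μ' ≤ p - 1 ∧
      bLow p ℓ T = μ * ℓ / p + μ' * ℓ / p :=
  Int.csInf_mem (floorPairSums_nonempty h2T hT) (floorPairSums_bddBelow hℓ (by omega) T)

theorem bLow_one {T : ℤ} (h2T : 2 ≤ T) (hT : T ≤ 2 * p - 2) : bLow p 1 T = 0 := by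
  obtain ⟨μ, μ', -, hμ, hμp, hμ', hμ'p, hb⟩ := exists_bLow_eq zero_le_one h2T hT
  rw [hb, mul_one, mul_one, Int.ediv_eq_zero_of_lt (by omega) (by omega),
    Int.ediv_eq_zero_of_lt (by omega) (by omega), add_zero]

end FloorSums

theorem mem_indexSetA_add_iff {p q ℓ : ℤ} (hq : 2 ≤ q) (hℓ : 0 ≤ ℓ) (hℓp : ℓ < p) {x : ℤ × ℤ} :
    x ∈ indexSetA p q ℓ + indexSetA p q ℓ ↔
      2 ≤ x.2 ∧ x.2 ≤ 2 * p - 2 ∧ bLow p ℓ x.2 ≤ x.1 ∧ x.1 ≤ x.2 * q - 4 := by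
  constructor
  · rintro ⟨a, ⟨ha1, ha2, ha3, ha4⟩, b, ⟨hb1, hb2, hb3, hb4⟩, rfl⟩
    have hb := bLow_le hℓ ha1 ha2 hb1 hb2
    have : (a.2 + b.2) * q = a.2 * q + b.2 * q := by ring
    simp only [Prod.fst_add, Prod.snd_add]
    omega
  · rintro ⟨h2T, hT, hbx, hxq⟩
    obtain ⟨μ, μ', hsum, hμ, hμp, hμ', hμ'p, hb⟩ := exists_bLow_eq hℓ h2T hT
    have := mul_ediv_le_sub_one hℓ hℓp hμ
    have := mul_ediv_le_sub_one hℓ hℓp hμ'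
    have : μ - 1 ≤ μ * q - 2 := by nlinarith
    have : μ' - 1 ≤ μ' * q - 2 := by nlinarith
    have : x.2 * q = μ * q + μ' * q := by rw [← hsum]; ring
    -- split `x.1` greedily: the first summand takes as much as its fibre allows
    set N := min (μ * q - 2) (x.1 - μ' * ℓ / p)
    refine ⟨(N, μ), ⟨hμ, hμp, ?_, ?_⟩, (x.1 - N, μ'), ⟨hμ', hμ'p, ?_, ?_⟩, ?_⟩
    all_goals first | ext <;> simp only [Prod.fst_add, Prod.snd_add] <;> omega | dsimp only; omega

theorem mem_setC_zero_iff {p q ℓ : ℤ} (hq : 2 ≤ q) (hℓ : 0 ≤ ℓ) (hℓp : ℓ < p) {x : ℤ × ℤ} :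
    x ∈ setC p q ℓ 0 ↔ x ∈ indexSetA p q ℓ + indexSetA p q ℓ ∧
      2 ≤ x.2 ∧ x.2 ≤ p - 2 ∧ bLow p ℓ (x.2 + p) - ℓ ≤ x.1 := by
  simp only [setC, jMin, sub_zero, Set.mem_ofPred_eq, mem_indexSetA_add_iff hq hℓ hℓp]
  have hℓpq : ℓ ≤ p * q := by nlinarith
  have : (x.2 + p) * q = x.2 * q + p * q := by ring
  constructor
  · rintro ⟨hx, hshift, -⟩
    exact ⟨hx, hx.1, by omega, by omega⟩
  · rintro ⟨hx, h2T, hT, hbx⟩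
    refine ⟨hx, by omega, fun j hj hjq => ⟨by omega, by omega, ?_, by omega⟩⟩
    split_ifs at hj with hℓ1
    · subst hℓ1
      rw [bLow_one (by omega) (by omega)] at hbx ⊢
      have := hx.2.2.1
      rw [bLow_one hx.1 hx.2.1] at this
      omega
    · omega

theorem setC_zero_description_general (p q ℓ : ℤ) (hq : 2 ≤ q)
    (hℓ1 : 1 ≤ ℓ) (hℓp : ℓ ≤ p - 1) :
    setC p q ℓ 0 =
      {x : ℤ × ℤ | x ∈ indexSetA p q ℓ + indexSetA p q ℓ ∧
        2 ≤ x.2 ∧ x.2 ≤ p - 2 ∧ bLow p ℓ (x.2 + p) - ℓ ≤ x.1} ∧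
    (ℓ = 1 → setC p q ℓ 0 =
      {x : ℤ × ℤ | x ∈ indexSetA p q ℓ + indexSetA p q ℓ ∧ 2 ≤ x.2 ∧ x.2 ≤ p - 2}) := by
  have hℓp' : ℓ < p := by omega
  refine ⟨Set.ext fun x => mem_setC_zero_iff hq (by omega) hℓp', ?_⟩
  rintro rfl
  ext x
  rw [mem_setC_zero_iff hq zero_le_one hℓp', Set.mem_ofPred_eq]
  refine ⟨fun ⟨hx, h2T, hT, _⟩ => ⟨hx, h2T, hT⟩, fun ⟨hx, h2T, hT⟩ => ⟨hx, h2T, hT, ?_⟩⟩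
  have hρ := ((mem_indexSetA_add_iff hq zero_le_one hℓp').1 hx).2.2.1
  rw [bLow_one h2T (by omega)] at hρ
  rw [bLow_one (by omega) (by omega)]
  omega

/-- `C(0) = {(ρ, T) ∈ A + A : 2 ≤ T ≤ p - 2, ρ ≥ b(T + p) - ℓ}`; in particular,
when `ℓ = 1`, `C(0) = {(ρ, T) ∈ A + A : 2 ≤ T ≤ p - 2}`. -/
theorem setC_zero_description (p q ℓ : ℤ) (hp : Prime p) (hq : 2 ≤ q)
    (hℓ1 : 1 ≤ ℓ) (hℓp : ℓ ≤ p - 1) :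
    setC p q ℓ 0 =
      {x : ℤ × ℤ | x ∈ indexSetA p q ℓ + indexSetA p q ℓ ∧
        2 ≤ x.2 ∧ x.2 ≤ p - 2 ∧ bLow p ℓ (x.2 + p) - ℓ ≤ x.1} ∧
    (ℓ = 1 → setC p q ℓ 0 =
      {x : ℤ × ℤ | x ∈ indexSetA p q ℓ + indexSetA p q ℓ ∧ 2 ≤ x.2 ∧ x.2 ≤ p - 2}) :=
  setC_zero_description_general p q ℓ hq hℓ1 hℓp
end

section
/- Let p be a prime and 1 ≤ ℓ ≤ p−1 an integer. For all integers T and α with α ≥ 0, 2 ≤ T, and T + α ≤ 2(p−1), one has b(T + α) ≤ b(T) + α. -/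
/-! Moving part of `α` onto each summand of an optimal split of `T` raises each floor
`⌊μℓ/p⌋` by at most the amount added, because `ℓ ≤ p`. Greedily putting as much of `α`
as fits onto `μ`, and the rest onto `μ'`, gives a split of `T + α` costing at most `b(T) + α`. -/

section

variable {p ℓ T α : ℤ}

lemma add_mul_ediv_le_mul_ediv_add {μ δ : ℤ} (hp : 0 < p) (hℓ : ℓ ≤ p) (hδ : 0 ≤ δ) :
    (μ + δ) * ℓ / p ≤ μ * ℓ / p + δ :=
  calc (μ + δ) * ℓ / p ≤ (μ * ℓ + δ * p) / p := Int.ediv_le_ediv hp (by nlinarith)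
    _ = μ * ℓ / p + δ := Int.add_mul_ediv_right _ _ hp.ne'

def bLowSet (p ℓ T : ℤ) : Set ℤ :=
  {s : ℤ | ∃ μ μ' : ℤ, μ + μ' = T ∧ 1 ≤ μ ∧ μ ≤ p - 1 ∧ 1 ≤ μ' ∧ μ' ≤ p - 1 ∧
    s = μ * ℓ / p + μ' * ℓ / p}

lemma bLow_eq_sInf_bLowSet : bLow p ℓ T = sInf (bLowSet p ℓ T) := rfl

lemma bLowSet_finite : (bLowSet p ℓ T).Finite := by
  refine ((Set.finite_Icc 1 (p - 1)).image fun μ => μ * ℓ / p + (T - μ) * ℓ / p).subset ?_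
  rintro s ⟨μ, μ', hsum, hμ1, hμp, -, -, rfl⟩
  exact ⟨μ, ⟨hμ1, hμp⟩, by simp only [← hsum, add_sub_cancel_left]⟩

lemma bLowSet_nonempty (hT : 2 ≤ T) (hTp : T ≤ 2 * (p - 1)) : (bLowSet p ℓ T).Nonempty :=
  ⟨_, max 1 (T - (p - 1)), T - max 1 (T - (p - 1)), by ring, by omega, by omega, by omega,
    by omega, rfl⟩

lemma exists_mem_bLowSet_add_le (hℓp : ℓ ≤ p - 1) (hα : 0 ≤ α) (hTα : T + α ≤ 2 * (p - 1))
    {s : ℤ} (hs : s ∈ bLowSet p ℓ T) : ∃ t ∈ bLowSet p ℓ (T + α), t ≤ s + α := by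
  obtain ⟨μ, μ', hsum, hμ1, hμp, hμ'1, hμ'p, rfl⟩ := hs
  have hp : 0 < p := by omega
  set δ := min α (p - 1 - μ)
  refine ⟨_, ⟨μ + δ, μ' + (α - δ), by omega, by omega, by omega, by omega, by omega, rfl⟩, ?_⟩
  have hμ : (μ + δ) * ℓ / p ≤ μ * ℓ / p + δ :=
    add_mul_ediv_le_mul_ediv_add hp (by omega) (by omega)
  have hμ' : (μ' + (α - δ)) * ℓ / p ≤ μ' * ℓ / p + (α - δ) :=
    add_mul_ediv_le_mul_ediv_add hp (by omega) (by omega)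
  linarith

end

theorem bLow_add_le_general (p ℓ : ℤ) (hℓp : ℓ ≤ p - 1)
    (T α : ℤ) (hα : 0 ≤ α) (hT : 2 ≤ T) (hTα : T + α ≤ 2 * (p - 1)) :
    bLow p ℓ (T + α) ≤ bLow p ℓ T + α := by
  rw [bLow_eq_sInf_bLowSet, bLow_eq_sInf_bLowSet, ← sub_le_iff_le_add]
  refine le_csInf (bLowSet_nonempty hT (by omega)) fun s hs => ?_
  obtain ⟨t, ht, hts⟩ := exists_mem_bLowSet_add_le hℓp hα hTα hs
  exact sub_le_iff_le_add.mpr ((csInf_le bLowSet_finite.bddBelow ht).trans hts)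

/-- for all integers `T, α` with `α ≥ 0`, `2 ≤ T` and `T + α ≤ 2(p-1)`,
one has `b(T + α) ≤ b(T) + α`. -/
theorem bLow_add_le (p ℓ : ℤ) (hp : Prime p) (hℓ1 : 1 ≤ ℓ) (hℓp : ℓ ≤ p - 1)
    (T α : ℤ) (hα : 0 ≤ α) (hT : 2 ≤ T) (hTα : T + α ≤ 2 * (p - 1)) :
    bLow p ℓ (T + α) ≤ bLow p ℓ T + α :=
  bLow_add_le_general p ℓ hℓp T α hα hT hTα
end

section
/- Let p be a prime and q ≥ 2, 1 ≤ ℓ ≤ p−1 integers. Then C(0) ⊆ C(i) for every integer i with 0 ≤ i ≤ p. -/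
/-!
Write `(ρ, T) = (N, μ) + (N', μ')` with both summands in `A`, and raise `μ, μ'` by a total of
`p - i` while keeping both in `[1, p - 1]`; there is room because `(ρ + ℓ, T + p) ∈ A + A` forces
`T ≤ p - 2`. The fibre of `A` over `μ` is the interval `[⌊μℓ/p⌋, μq - 2]`, so it suffices that
`ρ + j` lies between the sums of the new endpoints. The upper endpoints grow by `(p - i)q ≥ j`.
The lower ones stay `0` when `ℓ = 1`, and otherwise grow by at most `p - i ≤ j`, as `ℓ ≤ p`.
-/

open Pointwise

lemma Int.exists_mem_Icc_sub_mem_Icc {a b c d n : ℤ} (hab : a ≤ b) (hcd : c ≤ d)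
    (hlo : a + c ≤ n) (hhi : n ≤ b + d) : ∃ x ∈ Set.Icc a b, n - x ∈ Set.Icc c d :=
  ⟨min (n - c) b, by simp only [Set.mem_Icc]; omega, by simp only [Set.mem_Icc]; omega⟩

lemma Int.mul_ediv_lt_left {p ℓ ν : ℤ} (hp : 0 < p) (hℓp : ℓ < p) (hν : 0 < ν) :
    ν * ℓ / p < ν :=
  (Int.ediv_lt_iff_lt_mul hp).2 (mul_lt_mul_of_pos_left hℓp hν)

lemma Int.add_mul_ediv_le {p ℓ ν t : ℤ} (hp : 0 < p) (hℓp : ℓ ≤ p) (ht : 0 ≤ t) :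
    (ν + t) * ℓ / p ≤ ν * ℓ / p + t :=
  calc (ν + t) * ℓ / p ≤ (ν * ℓ + t * p) / p :=
        Int.ediv_le_ediv hp (by nlinarith)
    _ = ν * ℓ / p + t := Int.add_mul_ediv_right _ _ hp.ne'

section

variable {p q ℓ : ℤ}

lemma mem_indexSetA_add_indexSetA_iff (hp : 0 < p) (hq : 2 ≤ q) (hℓp : ℓ < p) {x : ℤ × ℤ} :
    x ∈ indexSetA p q ℓ + indexSetA p q ℓ ↔
      ∃ μ μ', μ + μ' = x.2 ∧ 1 ≤ μ ∧ μ ≤ p - 1 ∧ 1 ≤ μ' ∧ μ' ≤ p - 1 ∧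
        μ * ℓ / p + μ' * ℓ / p ≤ x.1 ∧ x.1 ≤ μ * q - 2 + (μ' * q - 2) := by
  constructor
  · rintro ⟨⟨N, μ⟩, ⟨hμ1, hμ2, hN1, hN2⟩, ⟨N', μ'⟩, ⟨hμ'1, hμ'2, hN'1, hN'2⟩, rfl⟩
    dsimp only [Prod.fst_add] at hN1 hN2 hN'1 hN'2 ⊢
    exact ⟨μ, μ', rfl, hμ1, hμ2, hμ'1, hμ'2, by omega, by omega⟩
  · rintro ⟨μ, μ', hx, hμ1, hμ2, hμ'1, hμ'2, hlo, hhi⟩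
    have hfibre {ν : ℤ} (hν : 1 ≤ ν) : ν * ℓ / p ≤ ν * q - 2 := by
      have := Int.mul_ediv_lt_left hp hℓp (by omega : 0 < ν)
      nlinarith
    obtain ⟨N, ⟨hN1, hN2⟩, hN'1, hN'2⟩ :=
      Int.exists_mem_Icc_sub_mem_Icc (hfibre hμ1) (hfibre hμ'1) hlo hhi
    exact ⟨(N, μ), ⟨hμ1, hμ2, hN1, hN2⟩, (x.1 - N, μ'), ⟨hμ'1, hμ'2, hN'1, hN'2⟩,
      Prod.ext (by simp) (by simpa using hx)⟩

lemma add_mul_ediv_add_le_add_jMin (hp : 0 < p) (hℓp : ℓ ≤ p) {μ μ' t t' i : ℤ}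
    (hμ : 0 ≤ μ) (hμ' : 0 ≤ μ') (ht : 0 ≤ t) (ht' : 0 ≤ t')
    (hμt : μ + t < p) (hμt' : μ' + t' < p) (htt : t + t' = p - i) :
    (μ + t) * ℓ / p + (μ' + t') * ℓ / p ≤ μ * ℓ / p + μ' * ℓ / p + jMin p ℓ i := by
  unfold jMin
  split_ifs with hℓ
  · subst hℓ
    simp only [mul_one]
    rw [Int.ediv_eq_zero_of_lt (by omega) hμt, Int.ediv_eq_zero_of_lt (by omega) hμt']
    have := Int.ediv_nonneg hμ hp.le
    have := Int.ediv_nonneg hμ' hp.le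
    omega
  · have := Int.add_mul_ediv_le (ν := μ) hp hℓp ht
    have := Int.add_mul_ediv_le (ν := μ') hp hℓp ht'
    omega

lemma add_mem_indexSetA_add_indexSetA (hp : 0 < p) (hq : 2 ≤ q) (hℓp : ℓ < p)
    {ρ T i j : ℤ} (h : (ρ, T) ∈ indexSetA p q ℓ + indexSetA p q ℓ) (hT : T ≤ p - 2)
    (hi0 : 0 ≤ i) (hip : i ≤ p) (hj : jMin p ℓ i ≤ j) (hj' : j ≤ (p - i) * q) :
    (ρ + j, T + p - i) ∈ indexSetA p q ℓ + indexSetA p q ℓ := by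
  obtain ⟨μ, μ', hμμ', hμ1, hμ2, hμ'1, hμ'2, hlo, hhi⟩ :=
    (mem_indexSetA_add_indexSetA_iff hp hq hℓp).1 h
  dsimp only at hμμ' hlo hhi
  obtain ⟨t, t', ht, ht', htt, hμt, hμt'⟩ : ∃ t t', 0 ≤ t ∧ 0 ≤ t' ∧ t + t' = p - i ∧
      μ + t ≤ p - 1 ∧ μ' + t' ≤ p - 1 :=
    ⟨min (p - i) (p - 1 - μ), p - i - min (p - i) (p - 1 - μ), by omega, by omega, by omega,
      by omega, by omega⟩
  have hlo' := add_mul_ediv_add_le_add_jMin hp hℓp.le (by omega : 0 ≤ μ) (by omega : 0 ≤ μ')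
    ht ht' (by omega) (by omega) htt
  have hhi' : (μ + t) * q + (μ' + t') * q = μ * q + μ' * q + (p - i) * q := by
    rw [← htt]; ring
  exact (mem_indexSetA_add_indexSetA_iff hp hq hℓp).2
    ⟨μ + t, μ' + t', by omega, by omega, hμt, by omega, hμt', by omega, by linarith⟩

end

theorem setC_zero_subset_general (p q ℓ : ℤ) (hq : 2 ≤ q)
    (hℓ1 : 1 ≤ ℓ) (hℓp : ℓ ≤ p - 1) (i : ℤ) (hi0 : 0 ≤ i) (hip : i ≤ p) :
    setC p q ℓ 0 ⊆ setC p q ℓ i := by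
  have hp : 0 < p := by omega
  rintro ⟨ρ, T⟩ ⟨hmem, hshift, -⟩
  obtain ⟨ν, ν', hνν', -, hν, -, hν', -⟩ :=
    (mem_indexSetA_add_indexSetA_iff hp hq (by omega)).1 hshift
  have hT : T ≤ p - 2 := by dsimp only at hνν'; omega
  exact ⟨hmem, hshift, fun j hj hj' =>
    add_mem_indexSetA_add_indexSetA hp hq (by omega) hmem hT hi0 hip hj hj'⟩

/-- `C(0) ⊆ C(i)` for every `0 ≤ i ≤ p`. -/
theorem setC_zero_subset (p q ℓ : ℤ) (hp : Prime p) (hq : 2 ≤ q)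
    (hℓ1 : 1 ≤ ℓ) (hℓp : ℓ ≤ p - 1) (i : ℤ) (hi0 : 0 ≤ i) (hip : i ≤ p) :
    setC p q ℓ 0 ⊆ setC p q ℓ i :=
  setC_zero_subset_general p q ℓ hq hℓ1 hℓp i hi0 hip
end

section
/- Let F be a field, p ≥ 2, q ≥ 1 and 1 ≤ ℓ integers, and let A(t) ∈ F[t] be a polynomial of degree at most q; for 1 ≤ i ≤ p−1 write A(t)^{p−i} = Σ_{j=0}^{(p−i)q} c_{j,i} t^j. Let λ, x, X ∈ F with λ ≠ 0, X ≠ 0, A(x) ≠ 0 and λX + 1 ≠ 0; set y = A(x)·(λX + 1) and suppose y^p = λ^p x^ℓ + A(x)^p. Set D = (A(x)(λX+1))^{2(p−1)}. Then for all nonnegative integers N, N', μ, μ', N'', N''', μ'', μ''' and families (N_{i,j}, N'_{i,j}, μ_{i,j}, μ'_{i,j}) (for 1 ≤ i ≤ p−1 and 0 ≤ j ≤ (p−i)q) satisfying N'' + N''' = N + N' + ℓ, μ'' + μ''' = μ + μ' + p, and N_{i,j} + N'_{i,j} = N + N' + j, μ_{i,j} + μ'_{i,j} = μ + μ' + p −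 i for each (i,j), the following identity holds in F: x^{N+N'}(A(x)X)^{2(p−1)−(μ+μ')} D^{−1} − x^{N''+N'''}(A(x)X)^{2(p−1)−(μ''+μ''')} D^{−1} + Σ_{i=1}^{p−1} Σ_{j=0}^{(p−i)q} λ^{i−p}·binom(p,i)·c_{j,i}· x^{N_{i,j}+N'_{i,j}}(A(x)X)^{2(p−1)−(μ_{i,j}+μ'_{i,j})} D^{−1} = 0. -/
/-!
Put `a = A(x)`, `w = a X` and `K = x^{N+N'} w^{e} D⁻¹` with `e = 2(p-1) - (μ+μ') - p`.
The constraints on the exponents turn the three kinds of terms into `K w^p`, `K x^ℓ` and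
`K λ^{i-p} binom(p,i) c_{j,i} x^j w^i`; summing the last over `j` gives back `a^{p-i}`.
What remains is `w^p - x^ℓ + ∑ λ^{i-p} binom(p,i) a^{p-i} w^i = 0`, and `λ^p` times it is
`a^p ((λX+1)^p - 1) - λ^p x^ℓ`, i.e. the curve equation `y^p = λ^p x^ℓ + a^p` once `(λX+1)^p`
is expanded.
-/
open Finset Polynomial

theorem add_one_pow_eq_add_sum_Icc {R : Type*} [CommSemiring R] {p : ℕ} (hp : 1 ≤ p) (t : R) :
    (t + 1) ^ p = t ^ p + 1 + ∑ i ∈ Icc 1 (p - 1), (p.choose i : R) * t ^ i := by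
  have hIcc : Icc 1 (p - 1) = Ico 1 p := by ext; simp; omega
  rw [add_pow, range_eq_Ico, sum_Ico_succ_top (by omega), sum_eq_sum_Ico_succ_bot (by omega), hIcc]
  simp only [one_pow, mul_one, Nat.choose_self, Nat.choose_zero_right, Nat.cast_one, pow_zero]
  rw [sum_congr rfl fun i _ => mul_comm _ _]
  ring

theorem sub_add_sum_zpow_choose_eq_zero {K : Type*} [Field K] {p : ℕ} (hp : 1 ≤ p)
    {lam a X s : K} (hlam : lam ≠ 0) (h : (a * (lam * X + 1)) ^ p = lam ^ p * s + a ^ p) :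
    (a * X) ^ p - s + ∑ i ∈ Icc 1 (p - 1),
      lam ^ ((i : ℤ) - p) * (p.choose i : K) * a ^ (p - i) * (a * X) ^ i = 0 := by
  have hscaled : lam ^ p * ∑ i ∈ Icc 1 (p - 1),
      lam ^ ((i : ℤ) - p) * (p.choose i : K) * a ^ (p - i) * (a * X) ^ i
        = a ^ p * ∑ i ∈ Icc 1 (p - 1), (p.choose i : K) * (lam * X) ^ i := by
    rw [mul_sum, mul_sum]
    refine sum_congr rfl fun i hi => ?_
    have hlam_i : lam ^ ((i : ℤ) - p) = lam ^ i / lam ^ p := by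
      rw [zpow_sub₀ hlam, zpow_natCast, zpow_natCast]
    have ha : a ^ (p - i) * a ^ i = a ^ p := pow_sub_mul_pow a (by simp at hi; omega)
    rw [hlam_i]
    field_simp
    linear_combination (p.choose i : K) * lam ^ i * X ^ i * ha
  rw [mul_pow, add_one_pow_eq_add_sum_Icc hp] at h
  refine (mul_eq_zero.mp ?_).resolve_left (pow_ne_zero p hlam)
  linear_combination hscaled + h

theorem sum_range_coeff_pow_mul_pow {R : Type*} [CommSemiring R] {A : R[X]} {q : ℕ}
    (hA : A.natDegree ≤ q) (n : ℕ) (x : R) :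
    ∑ j ∈ range (n * q + 1), (A ^ n).coeff j * x ^ j = A.eval x ^ n := by
  have hdeg : (A ^ n).natDegree < n * q + 1 :=
    Nat.lt_succ_of_le (natDegree_pow_le.trans (Nat.mul_le_mul_left n hA))
  rw [← eval_eq_sum_range' hdeg, eval_pow]

theorem relative_trinomial_relation_general {F : Type*} [Field F]
    (p q ℓ : ℕ) (hp : 2 ≤ p)
    (A : Polynomial F) (hA : A.natDegree ≤ q)
    (lam x X : F) (hlam : lam ≠ 0) (hX : X ≠ 0) (hAx : A.eval x ≠ 0)
    (heq : (A.eval x * (lam * X + 1)) ^ p = lam ^ p * x ^ ℓ + (A.eval x) ^ p)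
    (N N' μ μ' N'' N''' μ'' μ''' : ℕ)
    (Nij N'ij μij μ'ij : ℕ → ℕ → ℕ)
    (hN : N'' + N''' = N + N' + ℓ) (hμ : μ'' + μ''' = μ + μ' + p)
    (hNij : ∀ i, 1 ≤ i → i ≤ p - 1 → ∀ j ≤ (p - i) * q,
      Nij i j + N'ij i j = N + N' + j)
    (hμij : ∀ i, 1 ≤ i → i ≤ p - 1 → ∀ j ≤ (p - i) * q,
      μij i j + μ'ij i j = μ + μ' + p - i) :
    x ^ (N + N') * (A.eval x * X) ^ ((2 * ((p : ℤ) - 1)) - ((μ : ℤ) + (μ' : ℤ)))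
        * ((A.eval x * (lam * X + 1)) ^ (2 * (p - 1)))⁻¹
      - x ^ (N'' + N''') * (A.eval x * X) ^ ((2 * ((p : ℤ) - 1)) - ((μ'' : ℤ) + (μ''' : ℤ)))
        * ((A.eval x * (lam * X + 1)) ^ (2 * (p - 1)))⁻¹
      + ∑ i ∈ Finset.Icc 1 (p - 1), ∑ j ∈ Finset.range ((p - i) * q + 1),
          lam ^ ((i : ℤ) - (p : ℤ)) * (p.choose i : F) * (A ^ (p - i)).coeff j *
            x ^ (Nij i j + N'ij i j) *
            (A.eval x * X) ^ ((2 * ((p : ℤ) - 1)) - ((μij i j : ℤ) + (μ'ij i j : ℤ))) *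
            ((A.eval x * (lam * X + 1)) ^ (2 * (p - 1)))⁻¹ = 0 := by
  set a := A.eval x
  set w := a * X
  have hw : w ≠ 0 := mul_ne_zero hAx hX
  set e : ℤ := 2 * ((p : ℤ) - 1) - ((μ : ℤ) + (μ' : ℤ)) - p
  set D := (a * (lam * X + 1)) ^ (2 * (p - 1))
  set K := x ^ (N + N') * w ^ e * D⁻¹
  have hzpow : ∀ n : ℕ, w ^ (e + n) = w ^ e * w ^ n := fun n => by
    rw [zpow_add₀ hw, zpow_natCast]
  have hfirst : x ^ (N + N') * w ^ (2 * ((p : ℤ) - 1) - ((μ : ℤ) + (μ' : ℤ))) * D⁻¹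
      = K * w ^ p := by
    rw [show 2 * ((p : ℤ) - 1) - ((μ : ℤ) + (μ' : ℤ)) = e + p by ring, hzpow]; ring
  have hsecond : x ^ (N'' + N''') * w ^ (2 * ((p : ℤ) - 1) - ((μ'' : ℤ) + (μ''' : ℤ))) * D⁻¹
      = K * x ^ ℓ := by
    rw [show 2 * ((p : ℤ) - 1) - ((μ'' : ℤ) + (μ''' : ℤ)) = e by omega, hN, pow_add]; ring
  have hinner : ∀ i ∈ Icc 1 (p - 1), ∑ j ∈ range ((p - i) * q + 1),
      lam ^ ((i : ℤ) - p) * (p.choose i : F) * (A ^ (p - i)).coeff j * x ^ (Nij i j + N'ij i j) *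
        w ^ (2 * ((p : ℤ) - 1) - ((μij i j : ℤ) + (μ'ij i j : ℤ))) * D⁻¹
      = K * (lam ^ ((i : ℤ) - p) * (p.choose i : F) * a ^ (p - i) * w ^ i) := by
    intro i hi
    obtain ⟨hi1, hi2⟩ := mem_Icc.mp hi
    rw [← sum_range_coeff_pow_mul_pow hA (p - i) x, mul_sum, sum_mul, mul_sum]
    refine sum_congr rfl fun j hj => ?_
    have hj' : j ≤ (p - i) * q := Nat.lt_succ_iff.mp (mem_range.mp hj)
    have hμe := hμij i hi1 hi2 j hj'
    rw [show 2 * ((p : ℤ) - 1) - ((μij i j : ℤ) + (μ'ij i j : ℤ)) = e + i by omega, hzpow,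
      hNij i hi1 hi2 j hj', pow_add]
    ring
  rw [hfirst, hsecond, sum_congr rfl hinner, ← mul_sum]
  linear_combination K * sub_add_sum_zpow_choose_eq_zero (by omega) hlam heq

/-- the relative trinomial relations on the Bertin–Mézard model
`y = A(x)(λX + 1)` with `y^p = λ^p x^ℓ + A(x)^p`, where for `1 ≤ i ≤ p-1` one writes
`A(t)^{p-i} = ∑_{j=0}^{(p-i)q} c_{j,i} t^j` and `D = (A(x)(λX+1))^{2(p-1)}`. -/
theorem relative_trinomial_relation {F : Type*} [Field F]
    (p q ℓ : ℕ) (hp : 2 ≤ p) (hq : 1 ≤ q) (hℓ : 1 ≤ ℓ)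
    (A : Polynomial F) (hA : A.natDegree ≤ q)
    (lam x X : F) (hlam : lam ≠ 0) (hX : X ≠ 0) (hAx : A.eval x ≠ 0)
    (hlX : lam * X + 1 ≠ 0)
    (heq : (A.eval x * (lam * X + 1)) ^ p = lam ^ p * x ^ ℓ + (A.eval x) ^ p)
    (N N' μ μ' N'' N''' μ'' μ''' : ℕ)
    (Nij N'ij μij μ'ij : ℕ → ℕ → ℕ)
    (hN : N'' + N''' = N + N' + ℓ) (hμ : μ'' + μ''' = μ + μ' + p)
    (hNij : ∀ i, 1 ≤ i → i ≤ p - 1 → ∀ j ≤ (p - i) * q,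
      Nij i j + N'ij i j = N + N' + j)
    (hμij : ∀ i, 1 ≤ i → i ≤ p - 1 → ∀ j ≤ (p - i) * q,
      μij i j + μ'ij i j = μ + μ' + p - i) :
    x ^ (N + N') * (A.eval x * X) ^ ((2 * ((p : ℤ) - 1)) - ((μ : ℤ) + (μ' : ℤ)))
        * ((A.eval x * (lam * X + 1)) ^ (2 * (p - 1)))⁻¹
      - x ^ (N'' + N''') * (A.eval x * X) ^ ((2 * ((p : ℤ) - 1)) - ((μ'' : ℤ) + (μ''' : ℤ)))
        * ((A.eval x * (lam * X + 1)) ^ (2 * (p - 1)))⁻¹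
      + ∑ i ∈ Finset.Icc 1 (p - 1), ∑ j ∈ Finset.range ((p - i) * q + 1),
          lam ^ ((i : ℤ) - (p : ℤ)) * (p.choose i : F) * (A ^ (p - i)).coeff j *
            x ^ (Nij i j + N'ij i j) *
            (A.eval x * X) ^ ((2 * ((p : ℤ) - 1)) - ((μij i j : ℤ) + (μ'ij i j : ℤ))) *
            ((A.eval x * (lam * X + 1)) ^ (2 * (p - 1)))⁻¹ = 0 :=
  relative_trinomial_relation_general p q ℓ hp A hA lam x X hlam hX hAx heq N N' μ μ' N'' N''' μ''
    μ''' Nij N'ij μij μ'ij hN hμ hNij hμij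
end

section
/- Let p be a prime and q ≥ 2, 1 ≤ ℓ ≤ p−1 integers. Then |A + A| = Σ_{T=2}^{2(p−1)} (Tq − b(T) − 3). -/
/-!
The fibre of `A` over `μ` is the integer interval `[⌊μℓ/p⌋, μq - 2]`, which is nonempty since
`⌊μℓ/p⌋ < μ`. Sums of integer intervals are intervals, so the fibre of `A + A` over `T` is the
union over `μ + μ' = T` of `[⌊μℓ/p⌋ + ⌊μ'ℓ/p⌋, Tq - 4]`; these share their right endpoint, so the
union is `[b(T), Tq - 4]`, with `Tq - b(T) - 3` points.
-/

open Pointwise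

theorem Set.ncard_setOf_snd_mem_fst_mem {α β : Type*} (S : Finset β) (I : β → Finset α) :
    {x : α × β | x.2 ∈ S ∧ x.1 ∈ I x.2}.ncard = ∑ T ∈ S, (I T).card := by
  classical
  have hset : {x : α × β | x.2 ∈ S ∧ x.1 ∈ I x.2} = ↑(S.biUnion fun T => I T ×ˢ {T}) := by
    ext ⟨a, T⟩
    simp only [Set.mem_ofPred_eq, Finset.coe_biUnion, Finset.coe_product, Finset.coe_singleton,
      Set.mem_iUnion, Set.mem_prod, Set.mem_singleton_iff, Finset.mem_coe, exists_prop]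
    exact ⟨fun h => ⟨T, h.1, h.2, rfl⟩, fun ⟨_, hT, ha, rfl⟩ => ⟨hT, ha⟩⟩
  rw [hset, Set.ncard_coe_finset, Finset.card_biUnion]
  · simp
  · intro T _ T' _ hne
    rw [Function.onFun, Finset.disjoint_left]
    rintro ⟨a, T''⟩ h h'
    simp only [Finset.mem_product, Finset.mem_singleton] at h h'
    exact hne (h.2.symm.trans h'.2)

theorem Int.Icc_add_Icc {a b c d : ℤ} (hab : a ≤ b) (hcd : c ≤ d) :
    Set.Icc a b + Set.Icc c d = Set.Icc (a + c) (b + d) := by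
  refine (Set.Icc_add_Icc_subset a b c d).antisymm fun n hn => ?_
  exact ⟨max a (n - d), by grind, n - max a (n - d), by grind, by ring⟩

theorem Int.mul_ediv_lt_self {p ℓ μ : ℤ} (hp : 0 < p) (hℓp : ℓ < p) (hμ : 0 < μ) :
    μ * ℓ / p < μ :=
  Int.ediv_lt_of_lt_mul hp (by nlinarith)

section bLow

variable {p ℓ T : ℤ}

theorem exists_add_eq_of_mem_Icc (hT : T ∈ Finset.Icc 2 (2 * (p - 1))) :
    ∃ μ μ' : ℤ, μ + μ' = T ∧ 1 ≤ μ ∧ μ ≤ p - 1 ∧ 1 ≤ μ' ∧ μ' ≤ p - 1 := by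
  rw [Finset.mem_Icc] at hT
  exact ⟨max 1 (T - (p - 1)), T - max 1 (T - (p - 1)), by omega, by omega, by omega, by omega,
    by omega⟩

theorem bLow_le_iff (hp : 0 < p) (hℓ : 0 ≤ ℓ) (hT : T ∈ Finset.Icc 2 (2 * (p - 1))) (N : ℤ) :
    bLow p ℓ T ≤ N ↔ ∃ μ μ' : ℤ, μ + μ' = T ∧ 1 ≤ μ ∧ μ ≤ p - 1 ∧ 1 ≤ μ' ∧ μ' ≤ p - 1 ∧
      μ * ℓ / p + μ' * ℓ / p ≤ N := by
  have hbdd : BddBelow {s : ℤ | ∃ μ μ' : ℤ, μ + μ' = T ∧ 1 ≤ μ ∧ μ ≤ p - 1 ∧ 1 ≤ μ' ∧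
      μ' ≤ p - 1 ∧ s = μ * ℓ / p + μ' * ℓ / p} := by
    refine ⟨0, ?_⟩
    rintro s ⟨μ, μ', -, hμ, -, hμ', -, rfl⟩
    have := Int.ediv_nonneg (mul_nonneg (by omega : (0 : ℤ) ≤ μ) hℓ) hp.le
    have := Int.ediv_nonneg (mul_nonneg (by omega : (0 : ℤ) ≤ μ') hℓ) hp.le
    omega
  constructor
  · intro hN
    obtain ⟨μ, μ', hsum, hμ1, hμ2, hμ'1, hμ'2, hb⟩ := Int.csInf_mem (by
      obtain ⟨μ, μ', hsum, hμ1, hμ2, hμ'1, hμ'2⟩ := exists_add_eq_of_mem_Icc hT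
      exact ⟨_, μ, μ', hsum, hμ1, hμ2, hμ'1, hμ'2, rfl⟩) hbdd
    exact ⟨μ, μ', hsum, hμ1, hμ2, hμ'1, hμ'2, hb ▸ hN⟩
  · rintro ⟨μ, μ', hsum, hμ1, hμ2, hμ'1, hμ'2, hN⟩
    exact (csInf_le hbdd ⟨μ, μ', hsum, hμ1, hμ2, hμ'1, hμ'2, rfl⟩).trans hN

theorem bLow_le_sub_two (hℓ : 0 ≤ ℓ) (hℓp : ℓ < p) (hT : T ∈ Finset.Icc 2 (2 * (p - 1))) :
    bLow p ℓ T ≤ T - 2 := by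
  obtain ⟨μ, μ', hsum, hμ1, hμ2, hμ'1, hμ'2⟩ := exists_add_eq_of_mem_Icc hT
  refine (bLow_le_iff (by omega) hℓ hT _).mpr ⟨μ, μ', hsum, hμ1, hμ2, hμ'1, hμ'2, ?_⟩
  have := Int.mul_ediv_lt_self (by omega) hℓp (by omega : 0 < μ)
  have := Int.mul_ediv_lt_self (by omega) hℓp (by omega : 0 < μ')
  omega

end bLow

theorem mem_indexSetA_add_self {p q ℓ : ℤ} (hq : 2 ≤ q) (hℓ : 0 ≤ ℓ) (hℓp : ℓ < p)
    {x : ℤ × ℤ} : x ∈ indexSetA p q ℓ + indexSetA p q ℓ ↔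
      x.2 ∈ Finset.Icc 2 (2 * (p - 1)) ∧ x.1 ∈ Finset.Icc (bLow p ℓ x.2) (x.2 * q - 4) := by
  simp only [Finset.mem_Icc]
  constructor
  · rintro ⟨⟨N, μ⟩, ⟨hμ1, hμ2, hN1, hN2⟩, ⟨N', μ'⟩, ⟨hμ'1, hμ'2, hN'1, hN'2⟩, rfl⟩
    dsimp only at *
    simp only [Prod.fst_add, Prod.snd_add]
    have hT : μ + μ' ∈ Finset.Icc 2 (2 * (p - 1)) := Finset.mem_Icc.mpr ⟨by omega, by omega⟩
    refine ⟨Finset.mem_Icc.mp hT, ?_, by nlinarith⟩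
    exact (bLow_le_iff (by omega) hℓ hT _).mpr
      ⟨μ, μ', rfl, hμ1, hμ2, hμ'1, hμ'2, by omega⟩
  · rintro ⟨hT, hlo, hhi⟩
    obtain ⟨μ, μ', hsum, hμ1, hμ2, hμ'1, hμ'2, hle⟩ :=
      (bLow_le_iff (by omega) hℓ (Finset.mem_Icc.mpr hT) _).mp hlo
    have hf := Int.mul_ediv_lt_self (by omega) hℓp (by omega : 0 < μ)
    have hf' := Int.mul_ediv_lt_self (by omega) hℓp (by omega : 0 < μ')
    have hx : x.1 ∈ Set.Icc (μ * ℓ / p) (μ * q - 2) + Set.Icc (μ' * ℓ / p) (μ' * q - 2) := by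
      rw [Int.Icc_add_Icc (by nlinarith) (by nlinarith)]
      exact ⟨hle, by nlinarith⟩
    obtain ⟨m, ⟨hm1, hm2⟩, m', ⟨hm'1, hm'2⟩, hmm'⟩ := hx
    exact ⟨(m, μ), ⟨hμ1, hμ2, hm1, hm2⟩, (m', μ'), ⟨hμ'1, hμ'2, hm'1, hm'2⟩,
      Prod.ext hmm' hsum⟩

theorem card_minkowski_sum_general (p q ℓ : ℤ) (hq : 2 ≤ q)
    (hℓ1 : 1 ≤ ℓ) (hℓp : ℓ ≤ p - 1) :
    (((indexSetA p q ℓ + indexSetA p q ℓ).ncard : ℤ)) =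
      ∑ T ∈ Finset.Icc (2 : ℤ) (2 * (p - 1)), (T * q - bLow p ℓ T - 3) := by
  have hA : indexSetA p q ℓ + indexSetA p q ℓ = {x : ℤ × ℤ | x.2 ∈ Finset.Icc 2 (2 * (p - 1)) ∧
      x.1 ∈ Finset.Icc (bLow p ℓ x.2) (x.2 * q - 4)} :=
    Set.ext fun _ => mem_indexSetA_add_self hq (by omega) (by omega)
  rw [hA, Set.ncard_setOf_snd_mem_fst_mem _ fun T => Finset.Icc (bLow p ℓ T) (T * q - 4),
    Nat.cast_sum]
  refine Finset.sum_congr rfl fun T hT => ?_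
  have hb : bLow p ℓ T ≤ T - 2 := bLow_le_sub_two (by omega) (by omega) hT
  have hTq : T ≤ T * q - 2 := by nlinarith [(Finset.mem_Icc.mp hT).1]
  rw [Int.card_Icc]
  omega

/-- `|A + A| = ∑_{T=2}^{2(p-1)} (Tq - b(T) - 3)`. -/
theorem card_minkowski_sum (p q ℓ : ℤ) (hp : Prime p) (hq : 2 ≤ q)
    (hℓ1 : 1 ≤ ℓ) (hℓp : ℓ ≤ p - 1) :
    (((indexSetA p q ℓ + indexSetA p q ℓ).ncard : ℤ)) =
      ∑ T ∈ Finset.Icc (2 : ℤ) (2 * (p - 1)), (T * q - bLow p ℓ T - 3) :=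
  card_minkowski_sum_general p q ℓ hq hℓ1 hℓp
end
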